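/- arXiv:2501.16322 — 8 statements merged into one kernel-verified Lean document; each statement's English description precedes it below -/
import Mathlib

section
/- Suppose (U, D) is a fixed point of the UDU projected-gradient algorithm and the pre-projection iterate satisfies ‖Ū‖_F ≤ α. Then G U D = 0; equivalently, λ_j · (G u_j) = 0 for every column index j ∈ {1, …, r}. -/
open Matrix

attribute [local instance] Matrix.frobeniusNormedAddCommGroup Matrix.frobeniusNormedSpace

noncomputable section

/-- `A` is the Frobenius gradient of `g` at `X`: `g` has a Fréchet derivative at `X`
given by `H ↦ trace (Aᵀ * H)`. -/
def HasFrobGradientAt {m n : ℕ} (g : Matrix (Fin m) (Fin n) ℝ → ℝ)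
    (A X : Matrix (Fin m) (Fin n) ℝ) : Prop :=
  ∃ L : Matrix (Fin m) (Fin n) ℝ →L[ℝ] ℝ,
    HasFDerivAt g L X ∧ ∀ H : Matrix (Fin m) (Fin n) ℝ, L H = (Aᵀ * H).trace

/-- Projection onto the Frobenius-norm ball of radius `α`. -/
def projU {d r : ℕ} (α : ℝ) (M : Matrix (Fin d) (Fin r) ℝ) : Matrix (Fin d) (Fin r) ℝ :=
  if ‖M‖ ≤ α then M else (α / ‖M‖) • M

/-- Projection onto nonnegative diagonal matrices. -/
def projD {r : ℕ} (M : Matrix (Fin r) (Fin r) ℝ) : Matrix (Fin r) (Fin r) ℝ :=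
  Matrix.diagonal fun i => max (M i i) 0

/-- Pre-projection update for the `U`-factor: `Ū = U − 2η G U D`. -/
def Ubar {d r : ℕ} (η : ℝ) (G : Matrix (Fin d) (Fin d) ℝ)
    (U : Matrix (Fin d) (Fin r) ℝ) (D : Matrix (Fin r) (Fin r) ℝ) :
    Matrix (Fin d) (Fin r) ℝ :=
  U - (2 * η) • (G * U * D)

/-- Pre-projection update for the `D`-factor: `D̄ = D − η Uᵀ G U`. -/
def Dbar {d r : ℕ} (η : ℝ) (G : Matrix (Fin d) (Fin d) ℝ)
    (U : Matrix (Fin d) (Fin r) ℝ) (D : Matrix (Fin r) (Fin r) ℝ) :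
    Matrix (Fin r) (Fin r) ℝ :=
  D - η • (Uᵀ * G * U)

/-- `(U, D)` is a fixed point of the UDU projected-gradient algorithm. -/
def IsFixedPoint {d r : ℕ} (η α : ℝ) (G : Matrix (Fin d) (Fin d) ℝ)
    (U : Matrix (Fin d) (Fin r) ℝ) (D : Matrix (Fin r) (Fin r) ℝ) : Prop :=
  U = projU α (Ubar η G U D) ∧ D = projD (Dbar η G U D)

/-- Lemma (fixed-point characterization), case (a): if `(U, D)` is a fixed point of the
UDU projected-gradient algorithm and `‖Ū‖_F ≤ α`, then `G U D = 0`; equivalently,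
`λⱼ • (G uⱼ) = 0` for every column index `j`. -/
theorem fixed_point_case_a {d r : ℕ} (hd : 0 < d) (hr : 0 < r)
    (η α : ℝ) (hη : 0 < η) (hα : 0 < α)
    (f : Matrix (Fin d) (Fin d) ℝ → ℝ)
    (U : Matrix (Fin d) (Fin r) ℝ) (D : Matrix (Fin r) (Fin r) ℝ)
    (G : Matrix (Fin d) (Fin d) ℝ)
    (hDdiag : ∀ i j : Fin r, i ≠ j → D i j = 0)
    (hDnonneg : ∀ i : Fin r, 0 ≤ D i i)
    (hG : HasFrobGradientAt f G (U * D * Uᵀ))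
    (hfix : IsFixedPoint η α G U D)
    (hball : ‖Ubar η G U D‖ ≤ α) :
    G * U * D = 0 ∧
      ∀ j : Fin r, D j j • G.mulVec (fun i => U i j) = 0 := by
  have hU : U = Ubar η G U D := by
    have h := hfix.1
    rwa [projU, if_pos hball] at h
  have hzero : G * U * D = 0 := by
    have h : (2 * η) • (G * U * D) = 0 := by
      have := hU
      unfold Ubar at this
      exact sub_eq_self.mp this.symm
    have h2 : (2 * η) ≠ 0 := by positivity
    exact (smul_eq_zero.mp h).resolve_left h2
  refine ⟨hzero, fun j => ?_⟩
  funext i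
  have h := congrFun (congrFun hzero i) j
  simp only [Matrix.mul_apply, Matrix.zero_apply] at h
  have hcol : ∑ k, (∑ l, G i l * U l k) * D k j = (∑ l, G i l * U l j) * D j j := by
    rw [Finset.sum_eq_single j]
    · intro k _ hk; rw [hDdiag k j hk, mul_zero]
    · intro h; exact absurd (Finset.mem_univ j) h
  rw [hcol] at h
  simp only [Pi.smul_apply, Pi.zero_apply, Matrix.mulVec, dotProduct, smul_eq_mul]
  rw [mul_comm]
  exact h
end
end

section
/- Suppose (U, D) is a fixed point of the UDU projected-gradient algorithm and the pre-projection iterate satisfies ‖Ū‖_F > α. Then, setting β = (‖Ū‖_F − α)/(2αη), one has β > 0 and G U D = −β U; equivalently, λ_j · (G u_j) = −β u_j for every column index j ∈ {1, …, r}. -/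
open Matrix

attribute [local instance] Matrix.frobeniusNormedAddCommGroup Matrix.frobeniusNormedSpace

noncomputable section

/-- Lemma (fixed-point characterization), case (b): if `(U, D)` is a fixed point of the
UDU projected-gradient algorithm and `‖Ū‖_F > α`, then with `β = (‖Ū‖_F − α)/(2αη)` one
has `β > 0` and `G U D = −β U`; equivalently `λⱼ • (G uⱼ) = −β uⱼ` for every `j`. -/
theorem fixed_point_case_b {d r : ℕ} (hd : 0 < d) (hr : 0 < r)
    (η α : ℝ) (hη : 0 < η) (hα : 0 < α)
    (f : Matrix (Fin d) (Fin d) ℝ → ℝ)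
    (U : Matrix (Fin d) (Fin r) ℝ) (D : Matrix (Fin r) (Fin r) ℝ)
    (G : Matrix (Fin d) (Fin d) ℝ)
    (hDdiag : ∀ i j : Fin r, i ≠ j → D i j = 0)
    (hDnonneg : ∀ i : Fin r, 0 ≤ D i i)
    (hG : HasFrobGradientAt f G (U * D * Uᵀ))
    (hfix : IsFixedPoint η α G U D)
    (hball : α < ‖Ubar η G U D‖) :
    0 < (‖Ubar η G U D‖ - α) / (2 * α * η) ∧
    G * U * D = (-((‖Ubar η G U D‖ - α) / (2 * α * η))) • U ∧
      ∀ j : Fin r, D j j • G.mulVec (fun i => U i j)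
        = (-((‖Ubar η G U D‖ - α) / (2 * α * η))) • (fun i => U i j) := by
  have hn : α < ‖Ubar η G U D‖ := hball
  have hnpos : (0:ℝ) < ‖Ubar η G U D‖ := lt_trans hα hn
  set n : ℝ := ‖Ubar η G U D‖ with hn_def
  have hβpos : 0 < (n - α) / (2 * α * η) := by
    apply div_pos (by linarith) (by positivity)
  have hUeq : U = (α / n) • Ubar η G U D := by
    have h1 := hfix.1
    rw [projU, if_neg (not_le.mpr hn)] at h1
    exact h1
  have hmain : G * U * D = (-((n - α) / (2 * α * η))) • U := by
    funext i j
    have h := congrFun (congrFun hUeq i) j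
    simp only [Ubar, Matrix.smul_apply, Matrix.sub_apply, smul_eq_mul] at h
    have hne : n ≠ 0 := ne_of_gt hnpos
    have hαne : α ≠ 0 := ne_of_gt hα
    have hηne : η ≠ 0 := ne_of_gt hη
    show (G * U * D) i j = (-((n - α) / (2 * α * η))) • U i j
    rw [smul_eq_mul]
    field_simp at h ⊢
    nlinarith [h]
  refine ⟨hβpos, hmain, fun j => ?_⟩
  funext i
  have h := congrFun (congrFun hmain i) j
  simp only [Matrix.smul_apply, smul_eq_mul] at h
  show D j j * (G.mulVec fun i => U i j) i = -((n - α) / (2 * α * η)) * U i j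
  rw [← h]
  simp only [Matrix.mul_apply, Matrix.mulVec, dotProduct]
  rw [Finset.sum_eq_single j (fun b _ hb => by rw [hDdiag b j hb, mul_zero]) (by simp)]
  rw [mul_comm]
end
end

section
/- Suppose (U, D) is a fixed point of the UDU projected-gradient algorithm. If the j-th diagonal entry of D satisfies λ_j = 0, then u_jᵀ G u_j ≥ 0. -/
open Matrix

attribute [local instance] Matrix.frobeniusNormedAddCommGroup Matrix.frobeniusNormedSpace

noncomputable section

/-- Lemma (fixed-point characterization), case (c): if `(U, D)` is a fixed point of the
UDU projected-gradient algorithm and `λⱼ = 0`, then `uⱼᵀ G uⱼ ≥ 0`. -/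
theorem fixed_point_case_c {d r : ℕ} (hd : 0 < d) (hr : 0 < r)
    (η α : ℝ) (hη : 0 < η) (hα : 0 < α)
    (f : Matrix (Fin d) (Fin d) ℝ → ℝ)
    (U : Matrix (Fin d) (Fin r) ℝ) (D : Matrix (Fin r) (Fin r) ℝ)
    (G : Matrix (Fin d) (Fin d) ℝ)
    (hDdiag : ∀ i j : Fin r, i ≠ j → D i j = 0)
    (hDnonneg : ∀ i : Fin r, 0 ≤ D i i)
    (hG : HasFrobGradientAt f G (U * D * Uᵀ))
    (hfix : IsFixedPoint η α G U D)
    (j : Fin r) (hj : D j j = 0) :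
    0 ≤ dotProduct (fun i => U i j) (G.mulVec (fun i => U i j)) := by
  have hfix2 := hfix.2
  have hjj : D j j = max ((Dbar η G U D) j j) 0 := by
    conv_lhs => rw [hfix2]
    simp [projD, Matrix.diagonal]
  rw [hj] at hjj
  have hq : 0 ≤ (Uᵀ * G * U) j j := by
    have hD : (Dbar η G U D) j j = -(η * (Uᵀ * G * U) j j) := by
      simp [Dbar, Matrix.sub_apply, hj]
    rw [hD] at hjj
    have : -(η * (Uᵀ * G * U) j j) ≤ 0 := by
      by_contra h
      push_neg at h
      have := max_eq_left h.le
      rw [this] at hjj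
      linarith
    nlinarith
  have heq : (Uᵀ * G * U) j j
      = dotProduct (fun i => U i j) (G.mulVec (fun i => U i j)) := by
    simp [Matrix.mul_apply, dotProduct, Matrix.mulVec, Matrix.transpose_apply,
      Finset.mul_sum, Finset.sum_mul, mul_comm, mul_left_comm]
    rw [Finset.sum_comm]
    exact Finset.sum_congr rfl fun _ _ => Finset.sum_congr rfl fun _ _ => by ring
  linarith [heq ▸ hq]
end
end

section
/- Suppose (U, D) is a fixed point of the UDU projected-gradient algorithm. If the j-th diagonal entry of D satisfies λ_j > 0, then u_jᵀ G u_j = 0. -/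
open Matrix

attribute [local instance] Matrix.frobeniusNormedAddCommGroup Matrix.frobeniusNormedSpace

noncomputable section

/-- Lemma (fixed-point characterization), case (d): if `(U, D)` is a fixed point of the
UDU projected-gradient algorithm and `λⱼ > 0`, then `uⱼᵀ G uⱼ = 0`. -/
theorem fixed_point_case_d {d r : ℕ} (hd : 0 < d) (hr : 0 < r)
    (η α : ℝ) (hη : 0 < η) (hα : 0 < α)
    (f : Matrix (Fin d) (Fin d) ℝ → ℝ)
    (U : Matrix (Fin d) (Fin r) ℝ) (D : Matrix (Fin r) (Fin r) ℝ)
    (G : Matrix (Fin d) (Fin d) ℝ)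
    (hDdiag : ∀ i j : Fin r, i ≠ j → D i j = 0)
    (hDnonneg : ∀ i : Fin r, 0 ≤ D i i)
    (hG : HasFrobGradientAt f G (U * D * Uᵀ))
    (hfix : IsFixedPoint η α G U D)
    (j : Fin r) (hj : 0 < D j j) :
    dotProduct (fun i => U i j) (G.mulVec (fun i => U i j)) = 0 := by
  have hD := congrArg (fun M => M j j) hfix.2
  simp only [projD, Dbar, Matrix.diagonal_apply_eq, Matrix.sub_apply,
    Matrix.smul_apply, smul_eq_mul] at hD
  have hx : (Uᵀ * G * U) j j = 0 := by
    rcases le_or_gt (D j j - η * (Uᵀ * G * U) j j) 0 with h | h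
    · rw [max_eq_right h] at hD; exact absurd hD hj.ne'
    · rw [max_eq_left h.le] at hD
      have : η * (Uᵀ * G * U) j j = 0 := by linarith
      exact (mul_eq_zero.mp this).resolve_left hη.ne'
  rw [← hx]
  simp only [Matrix.mul_apply, Matrix.mulVec, dotProduct, Matrix.transpose_apply,
    Finset.mul_sum, Finset.sum_mul]
  rw [Finset.sum_comm]
  exact Finset.sum_congr rfl fun a _ => Finset.sum_congr rfl fun b _ => by ring
end
end

section
/- There are no fixed points (U, D) of the UDU projected-gradient algorithm whose pre-projection iterate satisfies ‖Ū‖_F > α. Equivalently, every fixed point (U, D) satisfies ‖Ū‖_F ≤ α, so the norm constraint is inactive at every fixed point. -/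
open Matrix

attribute [local instance] Matrix.frobeniusNormedAddCommGroup Matrix.frobeniusNormedSpace

noncomputable section

/-- Exclusion of spurious fixed points: every fixed point `(U, D)` of the UDU
projected-gradient algorithm satisfies `‖Ū‖_F ≤ α`, i.e. there is no fixed point with
`‖Ū‖_F > α`; the norm constraint is inactive at every fixed point. -/
theorem no_spurious_fixed_points {d r : ℕ} (hd : 0 < d) (hr : 0 < r)
    (η α : ℝ) (hη : 0 < η) (hα : 0 < α)
    (f : Matrix (Fin d) (Fin d) ℝ → ℝ)
    (U : Matrix (Fin d) (Fin r) ℝ) (D : Matrix (Fin r) (Fin r) ℝ)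
    (G : Matrix (Fin d) (Fin d) ℝ)
    (hDdiag : ∀ i j : Fin r, i ≠ j → D i j = 0)
    (hDnonneg : ∀ i : Fin r, 0 ≤ D i i)
    (hG : HasFrobGradientAt f G (U * D * Uᵀ))
    (hfix : IsFixedPoint η α G U D) :
    ‖Ubar η G U D‖ ≤ α := by
  by_contra hlt
  push_neg at hlt
  set B := Ubar η G U D with hB
  have hBpos : (0:ℝ) < ‖B‖ := hα.trans hlt
  have hU : U = (α / ‖B‖) • B := by
    have h := hfix.1
    rwa [projU, if_neg (not_le.mpr hlt)] at h
  set c : ℝ := α / ‖B‖ with hc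
  have hc0 : 0 < c := div_pos hα hBpos
  have hc1 : c < 1 := (div_lt_one hBpos).mpr hlt
  set M := G * U * D with hM
  have hU' : U = c • U - (c * (2 * η)) • M := by
    calc U = c • B := hU
    _ = c • (U - (2*η) • M) := rfl
    _ = c • U - (c * (2*η)) • M := by rw [smul_sub, smul_smul]
  have hden : (0:ℝ) < c * (2 * η) := by positivity
  have h1 : (c * (2 * η)) • M = (c - 1) • U := by
    have h2 : c • U = U + (c * (2 * η)) • M := sub_eq_iff_eq_add.mp hU'.symm
    rw [sub_smul, one_smul, eq_comm, sub_eq_iff_eq_add, add_comm]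
    exact h2
  set k : ℝ := (c * (2 * η))⁻¹ * (c - 1) with hk
  have hMeq : M = k • U := by
    rw [hk, ← smul_smul, ← h1, inv_smul_smul₀ (ne_of_gt hden)]
  have hkneg : k < 0 := by
    have : c - 1 < 0 := by linarith
    exact mul_neg_of_pos_of_neg (inv_pos.mpr hden) this
  -- U ≠ 0
  have hUnorm : ‖U‖ = α := by
    rw [hU, norm_smul, Real.norm_eq_abs, abs_of_pos hc0, hc,
      div_mul_cancel₀ _ (ne_of_gt hBpos)]
  have hUne : U ≠ 0 := by
    intro h
    rw [h, norm_zero] at hUnorm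
    exact absurd hUnorm.symm (ne_of_gt hα)
  -- trace (Uᵀ * U) > 0
  have htUU : (0:ℝ) < (Uᵀ * U).trace := by
    have hform : (Uᵀ * U).trace = ∑ j, ∑ i, U i j * U i j := by
      simp [Matrix.trace, Matrix.mul_apply, Matrix.diag]
    rw [hform]
    obtain ⟨i, j, hij⟩ : ∃ i j, U i j ≠ 0 := by
      by_contra h
      push_neg at h
      exact hUne (by ext i j; simpa using h i j)
    apply Finset.sum_pos'
    · intro x _
      exact Finset.sum_nonneg fun y _ => mul_self_nonneg _
    · refine ⟨j, Finset.mem_univ j, Finset.sum_pos' (fun y _ => mul_self_nonneg _)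
        ⟨i, Finset.mem_univ i, mul_self_pos.mpr hij⟩⟩
  -- trace (Uᵀ * M) two ways
  have hdiagzero : ∀ i : Fin r, (Uᵀ * G * U) i i * D i i = 0 := by
    intro i
    have hDfix := congrArg (fun X => X i i) hfix.2
    simp only [projD, Matrix.diagonal_apply_eq, Dbar, Matrix.sub_apply,
      Matrix.smul_apply, smul_eq_mul] at hDfix
    rcases lt_or_eq_of_le (hDnonneg i) with hpos | hzero
    · have harg : D i i - η * (Uᵀ * G * U) i i = D i i := by
        by_contra hne
        rcases max_cases (D i i - η * (Uᵀ * G * U) i i) 0 with ⟨h1', _⟩ | ⟨h1', _⟩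
        · exact hne (hDfix.trans h1').symm
        · rw [hDfix, h1'] at hpos; exact lt_irrefl 0 hpos
      have : η * (Uᵀ * G * U) i i = 0 := by linarith
      have : (Uᵀ * G * U) i i = 0 := by
        rcases mul_eq_zero.mp this with h | h
        · exact absurd h (ne_of_gt hη)
        · exact h
      rw [this, zero_mul]
    · rw [← hzero, mul_zero]
  have htrace0 : (Uᵀ * M).trace = 0 := by
    have hassoc : Uᵀ * M = (Uᵀ * G * U) * D := by
      rw [hM]; simp [Matrix.mul_assoc]
    rw [hassoc, Matrix.trace]
    apply Finset.sum_eq_zero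
    intro i _
    have : ((Uᵀ * G * U) * D) i i = (Uᵀ * G * U) i i * D i i := by
      rw [Matrix.mul_apply]
      apply Finset.sum_eq_single i
      · intro b _ hb
        rw [hDdiag b i hb, mul_zero]
      · intro h; exact absurd (Finset.mem_univ i) h
    rw [Matrix.diag_apply, this, hdiagzero i]
  have htrace' : (Uᵀ * M).trace = k * (Uᵀ * U).trace := by
    rw [hMeq, Matrix.mul_smul, Matrix.trace_smul, smul_eq_mul]
  rw [htrace0] at htrace'
  have : k * (Uᵀ * U).trace < 0 := mul_neg_of_neg_of_pos hkneg htUU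
  rw [← htrace'] at this
  exact lt_irrefl 0 this
end
end

section
/- Suppose (U, D) is a fixed point of the UDU projected-gradient algorithm. Define Û ∈ ℝ^{d×r} to be the matrix whose j-th column is û_j = √λ_j · u_j (i.e., Û = U D^{1/2}). Then Û Ûᵀ = U D Uᵀ = X and ∇f(X) Û = 0; that is, Û satisfies the stationarity condition of the Burer–Monteiro factorization at the same matrix X. -/
open Matrix

attribute [local instance] Matrix.frobeniusNormedAddCommGroup Matrix.frobeniusNormedSpace

noncomputable section

/-- At every fixed point `(U, D)` of the UDU projected-gradient algorithm, the matrix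
`Û = U D^{1/2}` (whose `j`-th column is `√λⱼ • uⱼ`) satisfies `Û Ûᵀ = U D Uᵀ = X` and
`∇f(X) Û = 0`, i.e. `Û` is a stationary point of the Burer–Monteiro factorization at the
same matrix `X`. -/
theorem fixed_point_gives_BM_stationary {d r : ℕ} (hd : 0 < d) (hr : 0 < r)
    (η α : ℝ) (hη : 0 < η) (hα : 0 < α)
    (f : Matrix (Fin d) (Fin d) ℝ → ℝ)
    (U : Matrix (Fin d) (Fin r) ℝ) (D : Matrix (Fin r) (Fin r) ℝ)
    (G : Matrix (Fin d) (Fin d) ℝ)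
    (hDdiag : ∀ i j : Fin r, i ≠ j → D i j = 0)
    (hDnonneg : ∀ i : Fin r, 0 ≤ D i i)
    (hG : HasFrobGradientAt f G (U * D * Uᵀ))
    (hfix : IsFixedPoint η α G U D) :
    (U * Matrix.diagonal fun j => Real.sqrt (D j j)) *
        (U * Matrix.diagonal fun j => Real.sqrt (D j j))ᵀ = U * D * Uᵀ ∧
    G * (U * Matrix.diagonal fun j => Real.sqrt (D j j)) = 0 := by
  obtain ⟨hU, hDfix⟩ := hfix
  have hη2 : (2 * η) ≠ 0 := by positivity
  have hD : D = Matrix.diagonal fun j => D j j := by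
    ext i j
    by_cases h : i = j
    · subst h; simp [Matrix.diagonal]
    · simp [Matrix.diagonal, h, hDdiag i j h]
  -- Step 1: G*U*D = k • U for some k
  obtain ⟨k, hk⟩ : ∃ k : ℝ, G * U * D = k • U := by
    rw [projU, Ubar] at hU
    split_ifs at hU with h
    · refine ⟨0, ?_⟩
      have h0 : (2 * η) • (G * U * D) = 0 := sub_eq_self.mp hU.symm
      rcases smul_eq_zero.mp h0 with h' | h'
      · exact absurd h' hη2
      · rw [h', zero_smul]
    · set c : ℝ := α / ‖U - (2 * η) • (G * U * D)‖ with hc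
      have hcpos : 0 < c := by
        apply div_pos hα
        linarith [not_le.mp h, hα]
      rw [smul_sub] at hU
      have h1 : c • ((2 * η) • (G * U * D)) = c • U - U := by
        rw [eq_sub_iff_add_eq, add_comm]
        exact eq_sub_iff_add_eq.mp hU
      have h2 : (c * (2 * η)) • (G * U * D) = (c - 1) • U := by
        rw [← smul_smul, h1, sub_smul, one_smul]
      refine ⟨(c * (2 * η))⁻¹ * (c - 1), ?_⟩
      have hne : c * (2 * η) ≠ 0 := mul_ne_zero (ne_of_gt hcpos) hη2
      rw [← smul_smul, ← h2, inv_smul_smul₀ hne]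
  -- Step 2: diagonal fixed point gives (UᵀGU)_jj = 0 when D_jj > 0
  have hUGU : ∀ j, 0 < D j j → (Uᵀ * G * U) j j = 0 := by
    intro j hj
    have h1 : D j j = max (D j j - η * (Uᵀ * G * U) j j) 0 := by
      have := congrFun (congrFun hDfix j) j
      simpa [projD, Dbar, Matrix.diagonal, Matrix.sub_apply, Matrix.smul_apply] using this
    rcases le_or_gt (D j j - η * (Uᵀ * G * U) j j) 0 with h | h
    · rw [max_eq_right h] at h1
      exact absurd h1.symm (ne_of_lt hj)
    · rw [max_eq_left h.le] at h1
      have : η * (Uᵀ * G * U) j j = 0 := by linarith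
      rcases mul_eq_zero.mp this with h' | h'
      · exact absurd h' (ne_of_gt hη)
      · exact h'
  -- entrywise equation from hk
  have hent : ∀ i j, (G * U) i j * D j j = k * U i j := by
    intro i j
    have hk' : (G * U) * Matrix.diagonal (fun j => D j j) = k • U := by
      rw [← hD]; exact hk
    have := congrFun (congrFun hk' i) j
    simpa [Matrix.mul_diagonal, Matrix.smul_apply] using this
  -- key : columns with positive eigenvalue are killed
  have key : ∀ i j, (G * U) i j * Real.sqrt (D j j) = 0 := by
    intro i j
    rcases eq_or_lt_of_le (hDnonneg j) with h0 | hpos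
    · rw [← h0, Real.sqrt_zero, mul_zero]
    · suffices h : (G * U) i j = 0 by rw [h, zero_mul]
      have hsum : k * ∑ i, (U i j) ^ 2 = 0 := by
        have htr : (Uᵀ * G * U) j j = ∑ i, U i j * (G * U) i j := by
          rw [Matrix.mul_assoc, Matrix.mul_apply]
          simp [Matrix.transpose_apply]
        have h0 : D j j * ∑ i, U i j * (G * U) i j = 0 := by
          rw [← htr, hUGU j hpos, mul_zero]
        calc k * ∑ i, (U i j) ^ 2 = ∑ i, U i j * (k * U i j) := by
              rw [Finset.mul_sum]; congr 1; funext i; ring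
          _ = ∑ i, U i j * ((G * U) i j * D j j) := by
              congr 1; funext i; rw [hent i j]
          _ = D j j * ∑ i, U i j * (G * U) i j := by
              rw [Finset.mul_sum]; congr 1; funext i; ring
          _ = 0 := h0
      rcases eq_or_ne k 0 with hk0 | hk0
      · have := hent i j
        rw [hk0, zero_mul] at this
        exact (mul_eq_zero.mp this).resolve_right (ne_of_gt hpos)
      · have hsz : ∑ i, (U i j) ^ 2 = 0 :=
          (mul_eq_zero.mp hsum).resolve_left hk0
        have hU0 : U i j = 0 := by
          have := (Finset.sum_eq_zero_iff_of_nonneg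
            (fun i _ => sq_nonneg (U i j))).mp hsz i (Finset.mem_univ i)
          exact pow_eq_zero_iff two_ne_zero |>.mp this
        have := hent i j
        rw [hU0, mul_zero] at this
        exact (mul_eq_zero.mp this).resolve_right (ne_of_gt hpos)
  constructor
  · have hSS : (Matrix.diagonal fun j => Real.sqrt (D j j)) *
        (Matrix.diagonal fun j => Real.sqrt (D j j))ᵀ = D := by
      rw [Matrix.diagonal_transpose, Matrix.diagonal_mul_diagonal]
      conv_rhs => rw [hD]
      exact congrArg Matrix.diagonal (funext fun j => Real.mul_self_sqrt (hDnonneg j))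
    rw [Matrix.transpose_mul, Matrix.mul_assoc, ← Matrix.mul_assoc
      (Matrix.diagonal fun j => Real.sqrt (D j j)), hSS, ← Matrix.mul_assoc]
  · ext i j
    rw [← Matrix.mul_assoc, Matrix.mul_diagonal, Matrix.zero_apply]
    exact key i j
end
end

section
/- Let Û ∈ ℝ^{d×r} be a nonzero stationary point of the Burer–Monteiro factorization of f, i.e., Û ≠ 0 and ∇f(Û Ûᵀ) Û = 0, and set X = Û Ûᵀ. For any α > 0 and any η > 0, define U = (α/‖Û‖_F) Û and D = (‖Û‖_F² / α²) · I_r (the r×r identity scaled by ‖Û‖_F²/α²). Then ‖U‖_F = α, U D Uᵀ = X, and (U, D) is a fixed point of the UDU projected-gradient algorithm. -/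
open Matrix

attribute [local instance] Matrix.frobeniusNormedAddCommGroup Matrix.frobeniusNormedSpace

noncomputable section

/-- Every nonzero stationary point `Û` of the Burer–Monteiro factorization gives rise to a
fixed point of the UDU projected-gradient algorithm: with `U = (α/‖Û‖_F) Û` and
`D = (‖Û‖_F²/α²) I`, one has `‖U‖_F = α`, `U D Uᵀ = Û Ûᵀ = X`, and `(U, D)` is a fixed
point. -/
theorem BM_stationary_gives_fixed_point {d r : ℕ} (hd : 0 < d) (hr : 0 < r)
    (η α : ℝ) (hη : 0 < η) (hα : 0 < α)
    (f : Matrix (Fin d) (Fin d) ℝ → ℝ)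
    (Uhat : Matrix (Fin d) (Fin r) ℝ) (hUhat : Uhat ≠ 0)
    (G : Matrix (Fin d) (Fin d) ℝ)
    (hG : HasFrobGradientAt f G (Uhat * Uhatᵀ))
    (hstat : G * Uhat = 0) :
    ‖(α / ‖Uhat‖) • Uhat‖ = α ∧
    ((α / ‖Uhat‖) • Uhat) * ((‖Uhat‖ ^ 2 / α ^ 2) • (1 : Matrix (Fin r) (Fin r) ℝ)) *
        ((α / ‖Uhat‖) • Uhat)ᵀ = Uhat * Uhatᵀ ∧
    IsFixedPoint η α G ((α / ‖Uhat‖) • Uhat)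
      ((‖Uhat‖ ^ 2 / α ^ 2) • (1 : Matrix (Fin r) (Fin r) ℝ)) := by
  
  have hn : (0:ℝ) < ‖Uhat‖ := norm_pos_iff.mpr hUhat
  set c : ℝ := α / ‖Uhat‖ with hc
  have hc0 : 0 < c := div_pos hα hn
  set U : Matrix (Fin d) (Fin r) ℝ := c • Uhat with hU
  set e : ℝ := ‖Uhat‖ ^ 2 / α ^ 2 with he
  have he0 : 0 ≤ e := by positivity
  set D : Matrix (Fin r) (Fin r) ℝ := e • (1 : Matrix (Fin r) (Fin r) ℝ) with hD
  have hnormU : ‖U‖ = α := by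
    rw [hU, norm_smul, Real.norm_eq_abs, abs_of_pos hc0, hc,
      div_mul_cancel₀ _ (ne_of_gt hn)]
  have hGU : G * U = 0 := by
    rw [hU, Matrix.mul_smul, hstat, smul_zero]
  refine ⟨hnormU, ?_, ?_, ?_⟩
  · rw [hD, hU]
    simp only [Matrix.mul_smul, Matrix.smul_mul, Matrix.mul_one, Matrix.transpose_smul,
      smul_smul]
    rw [he, hc]
    have : α / ‖Uhat‖ * (‖Uhat‖ ^ 2 / α ^ 2 * (α / ‖Uhat‖)) = 1 := by
      field_simp
    rw [this, one_smul]
  · have hUbar : Ubar η G U D = U := by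
      rw [Ubar, Matrix.mul_assoc, ← Matrix.mul_assoc G U D, hGU, Matrix.zero_mul,
        smul_zero, sub_zero]
    rw [hUbar, projU, if_pos (le_of_eq hnormU)]
  · have hDbar : Dbar η G U D = D := by
      rw [Dbar, Matrix.mul_assoc, hGU, Matrix.mul_zero, smul_zero, sub_zero]
    rw [hDbar, projD, hD]
    ext i j
    rw [Matrix.smul_apply, Matrix.one_apply, Matrix.diagonal_apply]
    by_cases h : i = j
    · subst h
      simp [max_eq_left he0]
    · simp [h]
end
end

section
/- For a matrix X ∈ ℝ^{d×d}, the following are equivalent: (i) there exists a fixed point (U, D) of the UDU projected-gradient algorithm with X = U D Uᵀ; (ii) there exists Û ∈ ℝ^{d×r} with X = Û Ûᵀ and ∇f(X) Û = 0. In other words, at the level of the product matrix X, the fixed points of the UDU algorithm coincide exactly with the stationary points of the Burer–Monteiro factorization, so adding the diagonal factor D and bounding U creates no new fixed points for X. -/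
open Matrix

attribute [local instance] Matrix.frobeniusNormedAddCommGroup Matrix.frobeniusNormedSpace

noncomputable section

/-- At the level of the product matrix `X`, the fixed points of the UDU projected-gradient
algorithm coincide exactly with the stationary points of the Burer–Monteiro factorization:
`X` arises from a fixed point `(U, D)` with `X = U D Uᵀ` iff there exists `Û` with
`X = Û Ûᵀ` and `∇f(X) Û = 0`. -/
theorem fixed_points_coincide_with_BM {d r : ℕ} (hd : 0 < d) (hr : 0 < r)
    (η α : ℝ) (hη : 0 < η) (hα : 0 < α)
    (f : Matrix (Fin d) (Fin d) ℝ → ℝ)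
    (grad : Matrix (Fin d) (Fin d) ℝ → Matrix (Fin d) (Fin d) ℝ)
    (hgrad : ∀ X : Matrix (Fin d) (Fin d) ℝ, HasFrobGradientAt f (grad X) X)
    (X : Matrix (Fin d) (Fin d) ℝ) :
    (∃ (U : Matrix (Fin d) (Fin r) ℝ) (D : Matrix (Fin r) (Fin r) ℝ),
        (∀ i j : Fin r, i ≠ j → D i j = 0) ∧ (∀ i : Fin r, 0 ≤ D i i) ∧
        X = U * D * Uᵀ ∧ IsFixedPoint η α (grad X) U D) ↔
    (∃ Uhat : Matrix (Fin d) (Fin r) ℝ, X = Uhat * Uhatᵀ ∧ grad X * Uhat = 0) := by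

  set G := grad X with hG
  constructor
  · rintro ⟨U, D, hoff, hnn, hX, hfixU, hfixD⟩
    have hDdiag : D = Matrix.diagonal (fun i => D i i) := by
      ext i j
      by_cases h : i = j
      · subst h; simp
      · simp [Matrix.diagonal_apply_ne _ h, hoff i j h]
    have hDentry : ∀ j, D j j = max (D j j - η * ((Uᵀ * G * U) j j)) 0 := by
      intro j
      conv_lhs => rw [hfixD]
      simp [projD, Dbar, Matrix.sub_apply, Matrix.smul_apply, smul_eq_mul]
    have htrace : ∀ j, 0 < D j j → (Uᵀ * G * U) j j = 0 := by
      intro j hj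
      rcases max_cases (D j j - η * ((Uᵀ * G * U) j j)) 0 with ⟨h1, h2⟩ | ⟨h1, h2⟩
      · have h3 := hDentry j
        rw [h1] at h3
        have h4 : η * ((Uᵀ * G * U) j j) = 0 := by linarith
        exact (mul_eq_zero.mp h4).resolve_left hη.ne'
      · have h3 := hDentry j
        rw [h1] at h3
        linarith
    have key : ∀ j, 0 < D j j → ∀ i, (G * U) i j = 0 := by
      intro j hj i
      have hM : ∀ i' j', (G * U * D) i' j' = (G * U) i' j' * D j' j' := by
        intro i' j'
        conv_lhs => rw [hDdiag]
        rw [Matrix.mul_diagonal]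
      by_cases hball : ‖Ubar η G U D‖ ≤ α
      · -- case inside the ball: U = Ubar, so G U D = 0
        have hU : U = Ubar η G U D :=
          hfixU.trans (by rw [projU, if_pos hball])
        have hz : (2 * η) • (G * U * D) = 0 := by
          have := hU.symm
          unfold Ubar at this
          exact sub_eq_self.mp this
        have hz2 : G * U * D = 0 := by
          rcases smul_eq_zero.mp hz with h | h
          · exfalso; nlinarith
          · exact h
        have := hM i j
        rw [hz2] at this
        simp only [Matrix.zero_apply] at this
        rcases mul_eq_zero.mp this.symm with h | h
        · exact h
        · exact absurd h hj.ne'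
      · -- case outside the ball
        push_neg at hball
        set N := ‖Ubar η G U D‖ with hN
        set c := α / N with hc
        have hNpos : 0 < N := lt_trans hα hball
        have hcpos : 0 < c := div_pos hα hNpos
        have hclt : c < 1 := (div_lt_one hNpos).mpr hball
        have hU : U = c • Ubar η G U D :=
          hfixU.trans (by rw [projU, if_neg (not_le.mpr hball), ← hN, ← hc])
        have hE : ∀ i', (1 - c) * U i' j = -(2 * η * c * D j j) * (G * U) i' j := by
          intro i'
          have h1 : U i' j = c * (U i' j - 2 * η * ((G * U) i' j * D j j)) := by
            conv_lhs => rw [hU]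
            simp only [Matrix.smul_apply, Ubar, Matrix.sub_apply, smul_eq_mul]
            rw [hM i' j]
          linear_combination h1
        have ht : (Uᵀ * G * U) j j = ∑ i', U i' j * (G * U) i' j := by
          rw [Matrix.mul_assoc, Matrix.mul_apply]
          simp [Matrix.transpose_apply]
        have hsum0 : ∑ i', U i' j * (G * U) i' j = 0 := by
          rw [← ht]; exact htrace j hj
        have hsq : ∀ i', (1 - c) * (U i' j)^2 =
            -(2 * η * c * D j j) * (U i' j * (G * U) i' j) := by
          intro i'
          linear_combination (U i' j) * hE i' 
        have hsumsq : ∑ i', (U i' j)^2 = 0 := by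
          have h1 : (1 - c) * ∑ i', (U i' j)^2 = 0 := by
            rw [Finset.mul_sum]
            calc ∑ i', (1 - c) * (U i' j)^2
                = ∑ i', -(2 * η * c * D j j) * (U i' j * (G * U) i' j) := by
                  exact Finset.sum_congr rfl fun i' _ => hsq i'
              _ = -(2 * η * c * D j j) * ∑ i', U i' j * (G * U) i' j := by
                  rw [Finset.mul_sum]
              _ = 0 := by rw [hsum0]; ring
          rcases mul_eq_zero.mp h1 with h | h
          · exfalso; linarith
          · exact h
        have hUz : ∀ i', U i' j = 0 := by
          intro i'
          have := (Finset.sum_eq_zero_iff_of_nonneg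
            (fun i' _ => sq_nonneg (U i' j))).mp hsumsq i' (Finset.mem_univ i')
          exact pow_eq_zero_iff (two_ne_zero) |>.mp this
        have := hE i
        rw [hUz i] at this
        have hcoef : (2 * η * c * D j j) ≠ 0 := by positivity
        have : (2 * η * c * D j j) * (G * U) i j = 0 := by linarith
        exact (mul_eq_zero.mp this).resolve_left hcoef
    -- construct Uhat
    set S : Matrix (Fin r) (Fin r) ℝ :=
      Matrix.diagonal (fun j => Real.sqrt (D j j)) with hS
    refine ⟨U * S, ?_, ?_⟩
    · have hSS : S * S = D := by
        rw [hS, Matrix.diagonal_mul_diagonal]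
        conv_rhs => rw [hDdiag]
        exact congrArg Matrix.diagonal (funext fun i => Real.mul_self_sqrt (hnn i))
      have hSt : Sᵀ = S := Matrix.diagonal_transpose _
      calc X = U * D * Uᵀ := hX
        _ = U * (S * S) * Uᵀ := by rw [hSS]
        _ = (U * S) * (U * S)ᵀ := by
            rw [Matrix.transpose_mul, hSt]
            simp only [Matrix.mul_assoc]
    · ext i j
      rw [← Matrix.mul_assoc, Matrix.mul_diagonal, Matrix.zero_apply]
      rcases (hnn j).lt_or_eq with h | h
      · rw [key j h i]; ring
      · rw [← h, Real.sqrt_zero]; ring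
  · rintro ⟨V, hX, hGV⟩
    set n := ‖V‖ with hn
    have hn0 : (0:ℝ) ≤ n := norm_nonneg V
    set c := α / (n + 1) with hc
    have hcpos : 0 < c := div_pos hα (by linarith)
    have hcne : c ≠ 0 := hcpos.ne'
    refine ⟨c • V, Matrix.diagonal (fun _ => c⁻¹ * c⁻¹), ?_, ?_, ?_, ?_, ?_⟩
    · intro i j hij
      exact Matrix.diagonal_apply_ne _ hij
    · intro i
      rw [Matrix.diagonal_apply_eq]
      exact mul_self_nonneg _
    · -- X = U D Uᵀ
      have h1 : (c • V : Matrix (Fin d) (Fin r) ℝ) * (Matrix.diagonal (fun _ => c⁻¹ * c⁻¹) : Matrix (Fin r) (Fin r) ℝ) = (c⁻¹) • V := by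
        ext i j
        rw [Matrix.mul_diagonal]
        simp only [Matrix.smul_apply, smul_eq_mul]
        field_simp
      rw [h1, Matrix.transpose_smul, Matrix.smul_mul, Matrix.mul_smul,
        smul_smul]
      rw [inv_mul_cancel₀ hcne, one_smul]
      exact hX
    · -- U fixed
      have hGU : G * (c • V) = 0 := by
        rw [Matrix.mul_smul, hGV, smul_zero]
      have hUbar : Ubar η G (c • V) (Matrix.diagonal (fun _ => c⁻¹ * c⁻¹)) = c • V := by
        unfold Ubar
        rw [hGU, Matrix.zero_mul, smul_zero, sub_zero]
      rw [hUbar, projU, if_pos]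
      rw [norm_smul, Real.norm_eq_abs, abs_of_pos hcpos]
      rw [hc, div_mul_eq_mul_div, div_le_iff₀ (by linarith)]
      nlinarith
    · -- D fixed
      have hGU : G * (c • V) = 0 := by
        rw [Matrix.mul_smul, hGV, smul_zero]
      have hDbar : Dbar η G (c • V) (Matrix.diagonal (fun _ => c⁻¹ * c⁻¹))
          = Matrix.diagonal (fun _ => c⁻¹ * c⁻¹) := by
        unfold Dbar
        rw [Matrix.mul_assoc, hGU, Matrix.mul_zero, smul_zero, sub_zero]
      rw [hDbar]
      unfold projD
      exact congrArg Matrix.diagonal (funext fun i => by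
        rw [Matrix.diagonal_apply_eq]
        exact (max_eq_left (mul_self_nonneg _)).symm)
end
end
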